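/- An optimal quantizer is stationary: if Γ* = {γ*_1,…,γ*_N} minimizes the distortion D(Γ) = E[min_{1≤i≤N}|X − γ_i|²] over all grids of size at most N, and each Voronoi cell of Γ* has positive probability, then E[X | q_N(X)] = q_N(X), where q_N(X) = ∑_i γ*_i 1_{C_i(Γ*)}(X) is the induced quantization. -/

import Mathlib

/-!
If the mean of `X` over some Voronoi cell of an optimal grid differed from the cell's centre,
moving that single centre to the cell mean would lower the distortion: points of the cell are
still assigned to some centre no farther than the moved one, the other points keep their
centre, and on a set of positive mass the mean is the unique minimiser of `t ↦ E[(X - t)²]`.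
So every cell has its centre as centroid. Since `q(X)` takes finitely many values, the sets
`{q(X) ∈ B}` are finite unions of cells, and the centroid condition is exactly the defining
property of `E[X | q(X)] = q(X)`.
-/

open MeasureTheory ProbabilityTheory

theorem memLp_of_finite_range {Ω E : Type*} [MeasurableSpace Ω] [NormedAddCommGroup E]
    {μ : Measure Ω} [IsFiniteMeasure μ] {Y : Ω → E} (hY : AEStronglyMeasurable Y μ)
    (hfin : (Set.range Y).Finite) (p : ENNReal) : MemLp Y p μ := by
  obtain ⟨C, hC⟩ := (hfin.image (‖·‖)).bddAbove
  exact MemLp.of_bound hY C (ae_of_all _ fun ω => hC ⟨Y ω, ⟨ω, rfl⟩, rfl⟩)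

section MeanMinimizesSquareDeviation

variable {α : Type*} [MeasurableSpace α] {ν : Measure α} [IsFiniteMeasure ν] {f : α → ℝ}

theorem integral_sub_const_sq (hf : MemLp f 2 ν) (s : ℝ) :
    ∫ x, (f x - s) ^ 2 ∂ν
      = ∫ x, f x ^ 2 ∂ν - 2 * s * ∫ x, f x ∂ν + s ^ 2 * ν.real Set.univ := by
  have hf1 : Integrable f ν := hf.integrable one_le_two
  have hf2 : Integrable (fun x => f x ^ 2) ν := hf.integrable_sq
  calc ∫ x, (f x - s) ^ 2 ∂ν = ∫ x, (f x ^ 2 - 2 * s * f x + s ^ 2) ∂ν := by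
        congr 1; ext x; ring
    _ = _ := by
        rw [integral_add (f := fun x => f x ^ 2 - 2 * s * f x) (hf2.sub (hf1.const_mul _))
          (integrable_const _), integral_sub hf2 (hf1.const_mul _), integral_const_mul,
          integral_const, smul_eq_mul]
        ring

theorem integral_sub_eq_zero_of_forall_integral_sq_le (hν : ν ≠ 0) (hf : MemLp f 2 ν) {c : ℝ}
    (hmin : ∀ t, ∫ x, (f x - c) ^ 2 ∂ν ≤ ∫ x, (f x - t) ^ 2 ∂ν) :
    ∫ x, (f x - c) ∂ν = 0 := by
  have : NeZero ν := ⟨hν⟩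
  have hg : MemLp (fun x => f x - c) 2 ν := hf.sub (memLp_const c)
  set m := ∫ x, (f x - c) ∂ν
  set a := ν.real Set.univ
  have ha : 0 < a := measureReal_univ_pos
  have hquad : ∀ s, 2 * s * m ≤ s ^ 2 * a := fun s => by
    have h := hmin (c + s)
    simp only [show ∀ x, f x - (c + s) = f x - c - s from fun x => by ring] at h
    rw [integral_sub_const_sq hg] at h
    linarith
  -- at its vertex `s = m / a` the quadratic `s ^ 2 * a - 2 * s * m` takes the value `-m ^ 2 / a`
  have h := hquad (m / a)
  field_simp at h
  nlinarith

end MeanMinimizesSquareDeviation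

theorem condExp_comap_ae_eq_of_setIntegral_fiber_sub_eq_zero {Ω : Type*} [MeasurableSpace Ω]
    {μ : Measure Ω} [IsFiniteMeasure μ] {X Y : Ω → ℝ} (hX : Integrable X μ) (hY : Measurable Y)
    (hfin : (Set.range Y).Finite)
    (hfiber : ∀ v ∈ Set.range Y, ∫ ω in Y ⁻¹' {v}, (X ω - v) ∂μ = 0) :
    μ[X | MeasurableSpace.comap Y Real.measurableSpace] =ᵐ[μ] Y := by
  have hm := hY.comap_le
  have : SigmaFinite (μ.trim hm) := by
    have := isFiniteMeasure_trim (μ := μ) hm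
    infer_instance
  have hYint : Integrable Y μ :=
    memLp_one_iff_integrable.mp (memLp_of_finite_range hY.aestronglyMeasurable hfin 1)
  refine (ae_eq_condExp_of_forall_setIntegral_eq hm hX (fun _ _ _ => hYint.integrableOn) ?_
    (Measurable.of_comap_le le_rfl).aestronglyMeasurable).symm
  rintro _ ⟨B, -, rfl⟩ -
  set T := (hfin.inter_of_left B).toFinset
  have hcover : Y ⁻¹' B = ⋃ v ∈ T, Y ⁻¹' {v} := by
    ext ω
    simp [T]
  have hzero : ∫ ω in Y ⁻¹' B, (X ω - Y ω) ∂μ = 0 := by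
    rw [hcover, integral_biUnion_finset (f := fun ω => X ω - Y ω) T
      (fun v _ => hY (measurableSet_singleton v))
      ((Set.pairwiseDisjoint_fiber Y _).subset (Set.subset_univ _))
      (fun _ _ => (hX.sub hYint).integrableOn)]
    refine Finset.sum_eq_zero fun v hv => ?_
    rw [← hfiber v ((hfin.inter_of_left B).mem_toFinset.mp hv).1]
    exact setIntegral_congr_fun (hY (measurableSet_singleton v)) fun ω hω => by rw [hω]
  rw [integral_sub hX.integrableOn hYint.integrableOn] at hzero
  linarith

section Quantization

variable {Ω ι : Type*} [MeasurableSpace Ω] {μ : Measure Ω} [IsFiniteMeasure μ] [Finite ι]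
  {X Y : Ω → ℝ} {Γ : ι → ℝ}

theorem iInf_sq_sub_eq_of_forall_abs_le {x : ℝ} {i : ι} (h : ∀ j, |x - Γ i| ≤ |x - Γ j|) :
    ⨅ j, (x - Γ j) ^ 2 = (x - Γ i) ^ 2 :=
  have : Nonempty ι := ⟨i⟩
  le_antisymm (ciInf_le (Finite.bddBelow_range _) i) (le_ciInf fun j => sq_le_sq.mpr (h j))

theorem setIntegral_sq_sub_le_of_forall_integral_iInf_le (hX : MemLp X 2 μ) (hY : Measurable Y)
    (hproj : ∀ ω, ∃ i, Y ω = Γ i ∧ ∀ j, |X ω - Γ i| ≤ |X ω - Γ j|)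
    (hopt : ∀ Γ' : ι → ℝ,
      ∫ ω, (⨅ i, (X ω - Γ i) ^ 2) ∂μ ≤ ∫ ω, (⨅ i, (X ω - Γ' i) ^ 2) ∂μ)
    (i : ι) (t : ℝ) :
    ∫ ω in Y ⁻¹' {Γ i}, (X ω - Γ i) ^ 2 ∂μ ≤ ∫ ω in Y ⁻¹' {Γ i}, (X ω - t) ^ 2 ∂μ := by
  classical
  set A := Y ⁻¹' {Γ i}
  have hA : MeasurableSet A := hY (measurableSet_singleton _)
  have hYL2 : MemLp Y 2 μ := memLp_of_finite_range hY.aestronglyMeasurable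
    ((Set.finite_range Γ).subset (Set.range_subset_iff.2 fun ω =>
      (hproj ω).imp fun _ h => h.1.symm)) 2
  -- the distortion bound when the `i`-th centre is moved to `s` and the cell `A` goes with it
  let g : ℝ → Ω → ℝ := fun s => A.piecewise (fun ω => (X ω - s) ^ 2) (fun ω => (X ω - Y ω) ^ 2)
  have hcell : ∀ s, IntegrableOn (fun ω => (X ω - s) ^ 2) A μ := fun s =>
    (hX.sub (memLp_const s)).integrable_sq.integrableOn
  have hrest : IntegrableOn (fun ω => (X ω - Y ω) ^ 2) Aᶜ μ :=
    (hX.sub hYL2).integrable_sq.integrableOn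
  have hg : ∀ s, ∫ ω, g s ω ∂μ = ∫ ω in A, (X ω - s) ^ 2 ∂μ + ∫ ω in Aᶜ, (X ω - Y ω) ^ 2 ∂μ :=
    fun s => integral_piecewise hA (hcell s) hrest
  have hg_int : ∀ s, Integrable (g s) μ := fun s => Integrable.piecewise hA (hcell s) hrest
  have hdist : ∀ ω, ⨅ j, (X ω - Γ j) ^ 2 = g (Γ i) ω := fun ω => by
    obtain ⟨k, hk, hnear⟩ := hproj ω
    rw [iInf_sq_sub_eq_of_forall_abs_le hnear, ← hk]
    simp only [g]
    by_cases hω : ω ∈ A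
    · rw [Set.piecewise_eq_of_mem _ _ _ hω, show Y ω = Γ i from hω]
    · rw [Set.piecewise_eq_of_notMem _ _ _ hω]
  have hmoved : ∀ ω, ⨅ j, (X ω - Function.update Γ i t j) ^ 2 ≤ g t ω := fun ω => by
    simp only [g]
    by_cases hω : ω ∈ A
    · rw [Set.piecewise_eq_of_mem _ _ _ hω]
      simpa using ciInf_le (Finite.bddBelow_range
        fun j => (X ω - Function.update Γ i t j) ^ 2) i
    · obtain ⟨k, hk, -⟩ := hproj ω
      have hki : k ≠ i := fun h => hω (by simp [A, hk, h])
      rw [Set.piecewise_eq_of_notMem _ _ _ hω]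
      simpa [hki, hk] using ciInf_le (Finite.bddBelow_range
        fun j => (X ω - Function.update Γ i t j) ^ 2) k
  have hle : ∫ ω, g (Γ i) ω ∂μ ≤ ∫ ω, g t ω ∂μ :=
    calc ∫ ω, g (Γ i) ω ∂μ = ∫ ω, (⨅ j, (X ω - Γ j) ^ 2) ∂μ := by simp only [hdist]
      _ ≤ ∫ ω, (⨅ j, (X ω - Function.update Γ i t j) ^ 2) ∂μ := hopt _
      _ ≤ ∫ ω, g t ω ∂μ := integral_mono_of_nonneg
          (ae_of_all _ fun ω => have : Nonempty ι := ⟨i⟩; le_ciInf fun _ => sq_nonneg _)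
          (hg_int t) (ae_of_all _ hmoved)
  rw [hg, hg] at hle
  linarith

end Quantization

theorem stmt6_general {Ω : Type*} [MeasurableSpace Ω] (μ : Measure Ω) [IsProbabilityMeasure μ]
    (X : Ω → ℝ) (hX : Measurable X) (hL2 : MemLp X 2 μ)
    (N : ℕ) (Γ : Fin N → ℝ)
    (hopt : ∀ Γ' : Fin N → ℝ,
      ∫ ω, (⨅ i : Fin N, (X ω - Γ i) ^ 2) ∂μ ≤ ∫ ω, (⨅ i : Fin N, (X ω - Γ' i) ^ 2) ∂μ)
    (q : ℝ → ℝ) (hq : Measurable q)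
    (hproj : ∀ x, ∃ i : Fin N, q x = Γ i ∧ ∀ j : Fin N, |x - Γ i| ≤ |x - Γ j|)
    (hpos : ∀ i : Fin N, μ {ω | q (X ω) = Γ i} ≠ 0) :
    μ[X | MeasurableSpace.comap (fun ω => q (X ω)) Real.measurableSpace]
      =ᵐ[μ] fun ω => q (X ω) := by
  set Y : Ω → ℝ := fun ω => q (X ω)
  have hY : Measurable Y := hq.comp hX
  have hnear : ∀ ω, ∃ i, Y ω = Γ i ∧ ∀ j, |X ω - Γ i| ≤ |X ω - Γ j| := fun ω => hproj (X ω)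
  refine condExp_comap_ae_eq_of_setIntegral_fiber_sub_eq_zero (hL2.integrable one_le_two) hY
    ((Set.finite_range Γ).subset (Set.range_subset_iff.2 fun ω =>
      (hnear ω).imp fun _ h => h.1.symm)) ?_
  rintro _ ⟨ω, rfl⟩
  obtain ⟨i, hi, -⟩ := hnear ω
  rw [hi]
  exact integral_sub_eq_zero_of_forall_integral_sq_le (Measure.restrict_eq_zero.not.mpr (hpos i))
    (hL2.restrict _) (setIntegral_sq_sub_le_of_forall_integral_iInf_le hL2 hY hnear hopt i)

/-- An optimal quantizer is stationary: if the grid `Γ` minimizes the distortion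
`D(Γ') = E[min_i |X − γ'_i|²]` over all grids of size at most `N`, `q` is the induced
nearest-neighbour quantization and every Voronoi cell has positive probability, then
`E[X | q_N(X)] = q_N(X)`. -/
theorem stmt6 {Ω : Type*} [MeasurableSpace Ω] (μ : Measure Ω) [IsProbabilityMeasure μ]
    (X : Ω → ℝ) (hX : Measurable X) (hL2 : MemLp X 2 μ)
    (habs : Measure.map X μ ≪ volume)
    (N : ℕ) (hN : 0 < N) (Γ : Fin N → ℝ)
    (hopt : ∀ Γ' : Fin N → ℝ,
      ∫ ω, (⨅ i : Fin N, (X ω - Γ i) ^ 2) ∂μ ≤ ∫ ω, (⨅ i : Fin N, (X ω - Γ' i) ^ 2) ∂μ)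
    (q : ℝ → ℝ) (hq : Measurable q)
    (hproj : ∀ x, ∃ i : Fin N, q x = Γ i ∧ ∀ j : Fin N, |x - Γ i| ≤ |x - Γ j|)
    (hpos : ∀ i : Fin N, μ {ω | q (X ω) = Γ i} ≠ 0) :
    μ[X | MeasurableSpace.comap (fun ω => q (X ω)) Real.measurableSpace]
      =ᵐ[μ] fun ω => q (X ω) :=
  stmt6_general μ X hX hL2 N Γ hopt q hq hproj hpos
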